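/- If G is a graph in which no two leaves are at distance exactly 4 apart, then in any residual graph R of the total domination game on G, any two targeted support vertices (white vertices with a white leaf neighbor in R) are either adjacent or at distance at least 3 apart in R. -/

import Mathlib

open SimpleGraph Finset

inductive GameColor | white | green | blue | red
deriving DecidableEq

def GameColor.weight : GameColor → ℕ
  | white => 3
  | green => 2
  | blue => 1
  | red => 0

variable {V : Type} [Fintype V] [DecidableEq V]

/-- The set of vertices totally dominated by the played set `D`. -/
def totDom (G : SimpleGraph V) [DecidableRel G.Adj] (D : Finset V) : Finset V :=
  Finset.univ.filter fun u => ∃ v ∈ D, G.Adj u v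

/-- A vertex `v` is a legal move if playing it totally dominates a new vertex. -/
def isLegal (G : SimpleGraph V) [DecidableRel G.Adj] (D : Finset V) (v : V) : Prop :=
  ∃ u, G.Adj v u ∧ u ∉ totDom G D

instance (G : SimpleGraph V) [DecidableRel G.Adj] (D : Finset V) :
    DecidablePred (isLegal G D) := fun v =>
  decidable_of_iff (∃ u, G.Adj v u ∧ u ∉ totDom G D) Iff.rfl

/-- The color of a vertex in the partially total dominated graph with played set `D`. -/
def colorOf (G : SimpleGraph V) [DecidableRel G.Adj] (D : Finset V) (v : V) : GameColor :=
  if v ∈ totDom G D then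
    (if isLegal G D v then .blue else .red)
  else (if v ∈ D then .green else .white)

/-- The total weight of the colored graph. -/
def totalWeight (G : SimpleGraph V) [DecidableRel G.Adj] (D : Finset V) : ℕ :=
  ∑ v, (colorOf G D v).weight

/-- The residualGraph graph: delete red vertices and blue–blue edges. -/
def residualGraph (G : SimpleGraph V) [DecidableRel G.Adj] (D : Finset V) : SimpleGraph V where
  Adj u w := G.Adj u w ∧ colorOf G D u ≠ .red ∧ colorOf G D w ≠ .red ∧
      ¬(colorOf G D u = .blue ∧ colorOf G D w = .blue)
  symm := ⟨fun u w ⟨h, a, b, c⟩ => ⟨h.symm, b, a, fun ⟨x, y⟩ => c ⟨y, x⟩⟩⟩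
  loopless := ⟨fun u ⟨h, _⟩ => G.ne_of_adj h rfl⟩

instance (G : SimpleGraph V) [DecidableRel G.Adj] (D : Finset V) :
    DecidableRel (residualGraph G D).Adj := fun u w =>
  decidable_of_iff (G.Adj u w ∧ colorOf G D u ≠ .red ∧ colorOf G D w ≠ .red ∧
      ¬(colorOf G D u = .blue ∧ colorOf G D w = .blue)) Iff.rfl

def legalMoves (G : SimpleGraph V) [DecidableRel G.Adj] (D : Finset V) : Finset V :=
  Finset.univ.filter (isLegal G D)

/-- The value of the total domination game from position `D` with `fuel` moves allowed,
where `isDom = true` when it is Dominator's turn (Dominator minimizes, Staller maximizes).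
Since each legal move totally dominates a new vertex, fuel `Fintype.card V` always suffices. -/
def gameVal (G : SimpleGraph V) [DecidableRel G.Adj] : Bool → ℕ → Finset V → ℕ
  | _, 0, _ => 0
  | isDom, n + 1, D =>
    if h : (legalMoves G D).Nonempty then
      if isDom then 1 + (legalMoves G D).inf' h fun v => gameVal G false n (insert v D)
      else 1 + (legalMoves G D).sup' h fun v => gameVal G true n (insert v D)
    else 0

/-- The game total domination number `γ_tg(G)`: Dominator starts, both play optimally. -/
def gtd (G : SimpleGraph V) [DecidableRel G.Adj] : ℕ :=
  gameVal G true (Fintype.card V) ∅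

/-!
A white vertex is not totally dominated, so each of its neighbours is still a legal move and hence
not red; thus white vertices keep their whole `G`-neighbourhood in the residual graph, and white
leaves of `R` are leaves of `G`. Two non-adjacent targeted support vertices `w, w'` at distance 2 in
`R ≤ G` are then also at distance 2 in `G`, and their leaves are at distance 4 in `G`.
-/

namespace SimpleGraph

section Leaves

variable {V : Type*} {G : SimpleGraph V} {x w y : V} [Fintype (G.neighborSet x)]

theorem eq_of_degree_eq_one_of_adj (hx : G.degree x = 1) (hxw : G.Adj x w) (hxy : G.Adj x y) :
    y = w :=
  (degree_eq_one_iff_existsUnique_adj.mp hx).unique hxy hxw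

/-- Every shortest walk out of a leaf `x ≠ y` passes through the support vertex `w` first. -/
theorem dist_eq_dist_add_one_of_degree_eq_one (hx : G.degree x = 1) (hxw : G.Adj x w)
    (hxy : x ≠ y) (hr : G.Reachable x y) : G.dist x y = G.dist w y + 1 := by
  refine le_antisymm ?_ ?_
  · have := (hxw.symm.reachable.trans hr).dist_triangle_right x
    rw [dist_eq_one_iff_adj.mpr hxw] at this
    omega
  · obtain ⟨p, hp⟩ := hr.exists_walk_length_eq_dist
    cases p with
    | nil => exact absurd rfl hxy
    | cons hxz q =>
      obtain rfl := eq_of_degree_eq_one_of_adj hx hxw hxz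
      have := dist_le q
      rw [Walk.length_cons] at hp
      omega

end Leaves

theorem dist_eq_four_of_degree_eq_one {V : Type*} {G : SimpleGraph V} [G.LocallyFinite]
    {x w w' x' : V} (hx : G.degree x = 1) (hx' : G.degree x' = 1) (hxw : G.Adj x w)
    (hx'w' : G.Adj x' w') (hww' : G.dist w w' = 2) : G.dist x x' = 4 := by
  have hreach : G.Reachable w w' := Reachable.of_dist_ne_zero (by omega)
  have hne : w ≠ w' := by rintro rfl; simp at hww'
  have hxx' : x ≠ x' := by
    rintro rfl
    exact hne (eq_of_degree_eq_one_of_adj hx hxw hx'w').symm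
  have hx'w : x' ≠ w := by
    rintro rfl
    rw [dist_eq_one_iff_adj.mpr hx'w'] at hww'
    omega
  have hwx' : G.dist w x' = G.dist w' w + 1 := by
    rw [dist_comm]
    exact dist_eq_dist_add_one_of_degree_eq_one hx' hx'w' hx'w
      (hx'w'.reachable.trans hreach.symm)
  rw [dist_eq_dist_add_one_of_degree_eq_one hx hxw hxx'
    (hxw.reachable.trans (hreach.trans hx'w'.symm.reachable)), hwx', dist_comm, hww']

end SimpleGraph

section Residual

variable {G : SimpleGraph V} [DecidableRel G.Adj] {D : Finset V} {v : V}

theorem residualGraph_le : residualGraph G D ≤ G := fun _ _ h => h.1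

theorem notMem_totDom_of_colorOf_eq_white (hv : colorOf G D v = .white) : v ∉ totDom G D := by
  intro hmem
  unfold colorOf at hv
  split_ifs at hv

theorem colorOf_ne_red_of_adj_white (hv : colorOf G D v = .white) {y : V} (hvy : G.Adj v y) :
    colorOf G D y ≠ .red := by
  have hlegal : isLegal G D y := ⟨v, hvy.symm, notMem_totDom_of_colorOf_eq_white hv⟩
  unfold colorOf
  split_ifs <;> simp

theorem residualGraph_adj_iff_of_white (hv : colorOf G D v = .white) {y : V} :
    (residualGraph G D).Adj v y ↔ G.Adj v y :=
  ⟨fun h => h.1, fun h => ⟨h, by simp [hv], colorOf_ne_red_of_adj_white hv h, by simp [hv]⟩⟩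

theorem degree_residualGraph_of_white (hv : colorOf G D v = .white) :
    (residualGraph G D).degree v = G.degree v := by
  simp only [← card_neighborFinset_eq_degree]
  congr 1
  ext y
  simp [residualGraph_adj_iff_of_white hv]

end Residual

/-- If no two leaves of `G` are at distance exactly 4 apart, then any two
distinct targeted support vertices (white vertices with a white leaf neighbor) of a residual
graph are adjacent or at distance at least 3 apart in the residual graph. -/
theorem stmt18 (G : SimpleGraph V) [DecidableRel G.Adj] (D : Finset V)
    (hleaf : ∀ a b, G.degree a = 1 → G.degree b = 1 → G.dist a b ≠ 4) :
    ∀ w w' : V, w ≠ w' →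
      (colorOf G D w = .white ∧ ∃ x, (residualGraph G D).Adj w x ∧
        colorOf G D x = .white ∧ (residualGraph G D).degree x = 1) →
      (colorOf G D w' = .white ∧ ∃ x', (residualGraph G D).Adj w' x' ∧
        colorOf G D x' = .white ∧ (residualGraph G D).degree x' = 1) →
      (residualGraph G D).Adj w w' ∨
        ((residualGraph G D).Reachable w w' → 3 ≤ (residualGraph G D).dist w w') := by
  rintro w w' hne ⟨hw, x, hwx, hx, hdx⟩ ⟨-, x', hwx', hx', hdx'⟩
  refine or_iff_not_imp_left.mpr fun hadj hreach => ?_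
  by_contra! hlt
  have hGnadj : ¬G.Adj w w' := by rwa [residualGraph_adj_iff_of_white hw] at hadj
  have hGdist : G.dist w w' = 2 :=
    le_antisymm ((hreach.dist_anti residualGraph_le).trans (by omega))
      ((hreach.mono residualGraph_le).one_lt_dist_of_ne_of_not_adj hne hGnadj)
  rw [degree_residualGraph_of_white hx] at hdx
  rw [degree_residualGraph_of_white hx'] at hdx'
  exact hleaf x x' hdx hdx'
    (dist_eq_four_of_degree_eq_one hdx hdx' hwx.1.symm hwx'.1.symm hGdist)
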